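/- (Lemma 2.) Let c ∈ ℝ (the RF relaying rate), M = 2^{2·c/B}, A = 2^{2·R_th/B}, Ā = max(max(0, (A − 1)/Ψ_s), (1 + Ψ_s·p − M)/(Ψ_s·M)), and B_s = min(p/2, (1 + Ψ_s·p)/(Ψ_s·A) − 1/Ψ_s). If Ā ≤ P ≤ B_s, then P is optimal for the hybrid-link problem: R_s(P) + min(R_{w→s}(P), c) = (B/2)·log₂(1 + Ψ_s·p), and for every real P' with 0 ≤ P' ≤ p one has R_s(P') + min(R_{w→s}(P'), c) ≤ R_s(P) + min(R_{w→s}(P), c). -/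

import Mathlib

/-!
With successive interference cancellation the two rates telescope:
`R_s(P') + R_{w→s}(P') = (B/2)·log₂(1 + Ψ_s·p)` for every `P' ≥ 0`, so the objective
`R_s + min(R_{w→s}, c)` never exceeds `(B/2)·log₂(1 + Ψ_s·p)`. The lower bound
`P ≥ (1 + Ψ_s·p − M)/(Ψ_s·M)` says exactly that `(1 + Ψ_s·p)/(1 + Ψ_s·P) ≤ M`, i.e.
`R_{w→s}(P) ≤ c`; then the minimum is `R_{w→s}(P)` and the bound is attained.
-/

open Real

lemma one_add_mul_sub_div_one_add_mul {Ψ p x : ℝ} (hx : 1 + Ψ * x ≠ 0) :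
    1 + Ψ * (p - x) / (1 + Ψ * x) = (1 + Ψ * p) / (1 + Ψ * x) := by
  field_simp
  ring

lemma half_mul_logb_add_half_mul_logb_sic (B : ℝ) {Ψ p x : ℝ}
    (hx : 1 + Ψ * x ≠ 0) (hp : 1 + Ψ * p ≠ 0) :
    B / 2 * logb 2 (1 + Ψ * x) + B / 2 * logb 2 (1 + Ψ * (p - x) / (1 + Ψ * x)) =
      B / 2 * logb 2 (1 + Ψ * p) := by
  rw [one_add_mul_sub_div_one_add_mul hx, logb_div hp hx]
  ring

lemma half_mul_logb_le_of_le_rpow {B c x : ℝ} (hB : 0 < B) (hx : 0 < x)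
    (hxc : x ≤ (2 : ℝ) ^ (2 * c / B)) : B / 2 * logb 2 x ≤ c := by
  have hlog : logb 2 x ≤ 2 * c / B := (logb_le_iff_le_rpow one_lt_two hx).2 hxc
  calc B / 2 * logb 2 x ≤ B / 2 * (2 * c / B) := by gcongr
    _ = c := by field_simp

lemma div_one_add_mul_le_of_le {Ψ p M P : ℝ} (hΨ : 0 < Ψ) (hM : 0 < M)
    (hP0 : 0 < 1 + Ψ * P) (hP : (1 + Ψ * p - M) / (Ψ * M) ≤ P) :
    (1 + Ψ * p) / (1 + Ψ * P) ≤ M := by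
  have hP' : 1 + Ψ * p - M ≤ P * (Ψ * M) := (div_le_iff₀ (by positivity)).1 hP
  rw [div_le_iff₀ hP0]
  linarith

theorem stmt_9_general (B p Ψs c : ℝ) (hB : 0 < B) (hp : 0 < p)
    (hΨs : 0 < Ψs)
    (M A Abar : ℝ)
    (hM : M = (2 : ℝ) ^ (2 * c / B))
    (hAbar : Abar = max (max 0 ((A - 1) / Ψs)) ((1 + Ψs * p - M) / (Ψs * M)))
    (P : ℝ) (hP1 : Abar ≤ P) :
    (B / 2 * Real.logb 2 (1 + Ψs * P) +
        min (B / 2 * Real.logb 2 (1 + Ψs * (p - P) / (1 + Ψs * P))) c =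
      B / 2 * Real.logb 2 (1 + Ψs * p)) ∧
    (∀ P' : ℝ, 0 ≤ P' → P' ≤ p →
      B / 2 * Real.logb 2 (1 + Ψs * P') +
          min (B / 2 * Real.logb 2 (1 + Ψs * (p - P') / (1 + Ψs * P'))) c ≤
        B / 2 * Real.logb 2 (1 + Ψs * P) +
          min (B / 2 * Real.logb 2 (1 + Ψs * (p - P) / (1 + Ψs * P))) c) := by
  have hMpos : 0 < M := hM ▸ rpow_pos_of_pos two_pos _
  have hP0 : 0 ≤ P := (le_max_left _ _).trans ((le_max_left _ _).trans (hAbar ▸ hP1))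
  have hPM : (1 + Ψs * p - M) / (Ψs * M) ≤ P := (le_max_right _ _).trans (hAbar ▸ hP1)
  have h1P : 0 < 1 + Ψs * P := by positivity
  have h1p : 0 < 1 + Ψs * p := by positivity
  have hmin : B / 2 * logb 2 (1 + Ψs * (p - P) / (1 + Ψs * P)) ≤ c := by
    rw [one_add_mul_sub_div_one_add_mul h1P.ne']
    exact half_mul_logb_le_of_le_rpow hB (by positivity)
      (hM ▸ div_one_add_mul_le_of_le hΨs hMpos h1P hPM)
  have heq : B / 2 * logb 2 (1 + Ψs * P) +
      min (B / 2 * logb 2 (1 + Ψs * (p - P) / (1 + Ψs * P))) c =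
        B / 2 * logb 2 (1 + Ψs * p) := by
    rw [min_eq_left hmin]
    exact half_mul_logb_add_half_mul_logb_sic B h1P.ne' h1p.ne'
  refine ⟨heq, fun P' hP'0 _ => heq ▸ ?_⟩
  have h1P' : 0 < 1 + Ψs * P' := by positivity
  calc B / 2 * logb 2 (1 + Ψs * P') +
        min (B / 2 * logb 2 (1 + Ψs * (p - P') / (1 + Ψs * P'))) c
      ≤ B / 2 * logb 2 (1 + Ψs * P') +
        B / 2 * logb 2 (1 + Ψs * (p - P') / (1 + Ψs * P')) := by
        gcongr
        exact min_le_left _ _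
    _ = B / 2 * logb 2 (1 + Ψs * p) := half_mul_logb_add_half_mul_logb_sic B h1P'.ne' h1p.ne'

/-- Lemma 2: if `Ā ≤ P ≤ B_s`, then `P` is optimal for the
hybrid-link problem: the objective equals `(B/2)·log₂(1 + Ψ_s·p)` and dominates
the objective at every `P' ∈ [0, p]`. -/
theorem stmt_9 (B p Ψs Rth c : ℝ) (hB : 0 < B) (hp : 0 < p)
    (hΨs : 0 < Ψs) (hRth : 0 ≤ Rth)
    (M A Abar Bs : ℝ)
    (hM : M = (2 : ℝ) ^ (2 * c / B))
    (hA : A = (2 : ℝ) ^ (2 * Rth / B))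
    (hAbar : Abar = max (max 0 ((A - 1) / Ψs)) ((1 + Ψs * p - M) / (Ψs * M)))
    (hBs : Bs = min (p / 2) ((1 + Ψs * p) / (Ψs * A) - 1 / Ψs))
    (P : ℝ) (hP1 : Abar ≤ P) (hP2 : P ≤ Bs) :
    (B / 2 * Real.logb 2 (1 + Ψs * P) +
        min (B / 2 * Real.logb 2 (1 + Ψs * (p - P) / (1 + Ψs * P))) c =
      B / 2 * Real.logb 2 (1 + Ψs * p)) ∧
    (∀ P' : ℝ, 0 ≤ P' → P' ≤ p →
      B / 2 * Real.logb 2 (1 + Ψs * P') +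
          min (B / 2 * Real.logb 2 (1 + Ψs * (p - P') / (1 + Ψs * P'))) c ≤
        B / 2 * Real.logb 2 (1 + Ψs * P) +
          min (B / 2 * Real.logb 2 (1 + Ψs * (p - P) / (1 + Ψs * P))) c) :=
  stmt_9_general B p Ψs c hB hp hΨs M A Abar hM hAbar P hP1
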